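/- Let (X,μ) be a nonatomic probability space, T a tree on X, and φ a T-good function. Then for every I ∈ S_φ, A(φ,I) = I \ ∪{ J : J ∈ S_φ, J* = I }, and consequently μ(A(φ,I)) = μ(I) − Σ_{J ∈ S_φ, J* = I} μ(J). -/

import Mathlib

open MeasureTheory Filter Set

noncomputable section

/-- A tree on a probability space, as in the paper. -/
structure DTree (X : Type*) [MeasurableSpace X] (μ : Measure X) where
  mem : Set (Set X)
  child : Set X → Set (Set X)
  meas : ∀ I ∈ mem, MeasurableSet I
  top_mem : Set.univ ∈ mem
  pos : ∀ I ∈ mem, 0 < μ I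
  child_sub_mem : ∀ I ∈ mem, child I ⊆ mem
  child_countable : ∀ I ∈ mem, (child I).Countable
  child_two : ∀ I ∈ mem, ∃ J ∈ child I, ∃ K ∈ child I, J ≠ K
  child_sub : ∀ I ∈ mem, ∀ J ∈ child I, J ⊆ I
  child_disj : ∀ I ∈ mem, (child I).Pairwise Disjoint
  child_union : ∀ I ∈ mem, ⋃₀ child I = I
  generated : ∃ lvl : ℕ → Set (Set X),
    lvl 0 = {Set.univ} ∧
    (∀ m, lvl (m + 1) = ⋃ I ∈ lvl m, child I) ∧
    mem = ⋃ m, lvl m ∧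
    Tendsto (fun m => ⨆ I ∈ lvl m, μ I) atTop (nhds 0)

variable {X : Type*} [MeasurableSpace X]

/-- The average of `φ` over `I`. -/
def trAvg (μ : Measure X) (φ : X → ℝ) (I : Set X) : ℝ :=
  (μ I).toReal⁻¹ * ∫ x in I, φ x ∂μ

/-- The dyadic maximal operator associated with the tree `T`. -/
def trMax (μ : Measure X) (T : DTree X μ) (φ : X → ℝ) (x : X) : ℝ :=
  sSup {r : ℝ | ∃ I ∈ T.mem, x ∈ I ∧ r = trAvg μ (fun y => |φ y|) I}

/-- The exceptional set `A_φ`. -/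
def trBad (μ : Measure X) (T : DTree X μ) (φ : X → ℝ) : Set X :=
  {x | ∀ I ∈ T.mem, x ∈ I → trAvg μ φ I < trMax μ T φ x}

/-- `φ` is `T`-good if the exceptional set `A_φ` is null. -/
def TGood (μ : Measure X) (T : DTree X μ) (φ : X → ℝ) : Prop :=
  μ (trBad μ T φ) = 0

/-- The set `A(φ, I) = {x ∈ X \ A_φ : I_φ(x) = I}`, where `I_φ(x)` is the largest
element `I` of the tree with `x ∈ I` and `M_T φ x = Av_I(φ)`. -/
def trA (μ : Measure X) (T : DTree X μ) (φ : X → ℝ) (I : Set X) : Set X :=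
  {x | x ∉ trBad μ T φ ∧ I ∈ T.mem ∧ x ∈ I ∧ trMax μ T φ x = trAvg μ φ I ∧
    ∀ J ∈ T.mem, x ∈ J → trMax μ T φ x = trAvg μ φ J → J ⊆ I}

/-- The subtree `S_φ`. -/
def trS (μ : Measure X) (T : DTree X μ) (φ : X → ℝ) : Set (Set X) :=
  {I | I ∈ T.mem ∧ 0 < μ (trA μ T φ I)} ∪ {Set.univ}

/-- `J* = I` : `I` is the smallest element of `S_φ` properly containing `J`. -/
def IsStarOf (μ : Measure X) (T : DTree X μ) (φ : X → ℝ) (J I : Set X) : Prop :=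
  I ∈ trS μ T φ ∧ J ⊂ I ∧ ∀ K ∈ trS μ T φ, J ⊂ K → I ⊆ K

/-- `H_q(z) = (1-q) z^q + q z^(q-1)`. -/
def funH (q z : ℝ) : ℝ := (1 - q) * z ^ q + q * z ^ (q - 1)

/-- `ω_q(z) = (H_q⁻¹(z))^q`, with `H_q⁻¹` the inverse of `H_q : [1,∞) → [1,∞)`. -/
def funOmega (q z : ℝ) : ℝ := (Function.invFunOn (funH q) (Set.Ici 1) z) ^ q

/-- The constant `c = ω_q(((1-q)L^q + qL^(q-1)f)/h)`. -/
def bellC (q f h L : ℝ) : ℝ := funOmega q (((1 - q) * L ^ q + q * L ^ (q - 1) * f) / h)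

/-- An extremal sequence for the Bellman function of three variables. -/
def IsExtremal (μ : Measure X) (T : DTree X μ) (q f h L : ℝ) (φ : ℕ → X → ℝ) : Prop :=
  (∀ n x, 0 ≤ φ n x) ∧ (∀ n, Measurable (φ n)) ∧ (∀ n, Integrable (φ n) μ) ∧
  (∀ n, ∫ x, φ n x ∂μ = f) ∧ (∀ n, ∫ x, φ n x ^ q ∂μ = h) ∧
  Tendsto (fun n => ∫ x, (max (trMax μ T (φ n) x) L) ^ q ∂μ) atTop
    (nhds (bellC q f h L * h))

/-!
Averages strictly increase along the chain of cells from `X` down to `I_φ(x)`. The key point is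
a stopping-time argument: the maximal subcells of a cell `K` with average above `Av_K(φ)` are
disjoint and cannot exhaust `K` up to a null set (otherwise `∫_K φ > Av_K(φ) μ(K)`), so if the
average of `K` exceeds those of all its ancestors, `μ(A(φ, K)) > 0`. Consequently a point
`x ∈ I` that avoids every `J` with `J* = I` lies in no subcell of `I` with larger average (the
maximal such subcell would belong to `S_φ`), hence `I_φ(x) = I`; conversely a point of `A(φ, I)`
inside such a `J` would have `M_T φ(x) ≥ Av_J(φ) > Av_I(φ)`. The cells `J` with `J* = I` are
countably many and pairwise disjoint, which gives the measure identity.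
-/

namespace DTree

variable {μ : Measure X} (T : DTree X μ)

def level : ℕ → Set (Set X)
  | 0 => {univ}
  | m + 1 => ⋃ I ∈ level m, T.child I

theorem mem_iff_exists_level {I : Set X} : I ∈ T.mem ↔ ∃ m, I ∈ T.level m := by
  obtain ⟨lvl, hl0, hlS, hlU, -⟩ := T.generated
  have hlvl : lvl = T.level := by
    funext m
    induction m with
    | zero => exact hl0
    | succ m ih => rw [hlS, ih]; rfl
  rw [hlU, hlvl, mem_iUnion]

variable {T}

theorem level_subset_mem (m : ℕ) : T.level m ⊆ T.mem :=
  fun _ hI => T.mem_iff_exists_level.2 ⟨m, hI⟩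

theorem nonempty_of_mem {I : Set X} (hI : I ∈ T.mem) : I.Nonempty :=
  nonempty_of_measure_ne_zero (T.pos I hI).ne'

theorem countable_mem : T.mem.Countable := by
  have hlevel : ∀ m, (T.level m).Countable := by
    intro m
    induction m with
    | zero => exact countable_singleton _
    | succ m ih => exact ih.biUnion fun I hI => T.child_countable I (level_subset_mem m hI)
  rw [show T.mem = ⋃ m, T.level m from ext fun _ => by simp [T.mem_iff_exists_level]]
  exact countable_iUnion hlevel

theorem pairwise_disjoint_level (m : ℕ) : (T.level m).Pairwise Disjoint := by
  induction m with
  | zero => exact pairwise_singleton _ _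
  | succ m ih =>
    intro J hJ K hK hJK
    obtain ⟨I₁, hI₁, hJI₁⟩ := mem_iUnion₂.1 hJ
    obtain ⟨I₂, hI₂, hKI₂⟩ := mem_iUnion₂.1 hK
    have hJ₁ := T.child_sub I₁ (level_subset_mem m hI₁) J hJI₁
    have hK₂ := T.child_sub I₂ (level_subset_mem m hI₂) K hKI₂
    obtain rfl | hI := eq_or_ne I₁ I₂
    · exact T.child_disj I₁ (level_subset_mem m hI₁) hJI₁ hKI₂ hJK
    · exact (ih hI₁ hI₂ hI).mono hJ₁ hK₂

theorem exists_level_superset {m n : ℕ} (hmn : m ≤ n) {J : Set X} (hJ : J ∈ T.level n) :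
    ∃ K ∈ T.level m, J ⊆ K := by
  induction n, hmn using Nat.le_induction generalizing J with
  | base => exact ⟨J, hJ, subset_rfl⟩
  | succ n _ ih =>
    obtain ⟨I, hI, hJI⟩ := mem_iUnion₂.1 hJ
    obtain ⟨K, hK, hIK⟩ := ih hI
    exact ⟨K, hK, (T.child_sub I (level_subset_mem n hI) J hJI).trans hIK⟩

theorem subset_of_level_le {m n : ℕ} {J K : Set X} (hJ : J ∈ T.level n) (hK : K ∈ T.level m)
    (hmn : m ≤ n) (hJK : (J ∩ K).Nonempty) : J ⊆ K := by
  obtain ⟨K', hK', hJK'⟩ := exists_level_superset hmn hJ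
  obtain ⟨x, hxJ, hxK⟩ := hJK
  obtain rfl : K' = K := by
    by_contra hne
    exact disjoint_left.1 (pairwise_disjoint_level m hK' hK hne) (hJK' hxJ) hxK
  exact hJK'

theorem lt_of_ssubset {m n : ℕ} {J K : Set X} (hJ : J ∈ T.level n) (hK : K ∈ T.level m)
    (hJK : J ⊂ K) : m < n := by
  by_contra! hnm
  obtain ⟨x, hx⟩ := nonempty_of_mem (level_subset_mem n hJ)
  exact hJK.not_subset (subset_of_level_le hK hJ hnm ⟨x, hJK.subset hx, hx⟩)

theorem subset_or_subset {I J : Set X} (hI : I ∈ T.mem) (hJ : J ∈ T.mem)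
    (hIJ : (I ∩ J).Nonempty) : I ⊆ J ∨ J ⊆ I := by
  obtain ⟨n, hn⟩ := T.mem_iff_exists_level.1 hI
  obtain ⟨m, hm⟩ := T.mem_iff_exists_level.1 hJ
  rcases le_total m n with h | h
  · exact .inl (subset_of_level_le hn hm h hIJ)
  · exact .inr (subset_of_level_le hm hn h (inter_comm I J ▸ hIJ))

theorem subset_or_ssubset {I J : Set X} {x : X} (hI : I ∈ T.mem) (hJ : J ∈ T.mem)
    (hxI : x ∈ I) (hxJ : x ∈ J) : J ⊆ I ∨ I ⊂ J := by
  rcases subset_or_subset hI hJ ⟨x, hxI, hxJ⟩ with hIJ | hJI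
  · rcases hIJ.eq_or_ssubset with rfl | hIJ
    · exact .inl subset_rfl
    · exact .inr hIJ
  · exact .inl hJI

theorem exists_maximal {P : Set X → Prop} (hP : ∀ K, P K → K ∈ T.mem) {J : Set X}
    (hJ : P J) : ∃ K, J ⊆ K ∧ Maximal P K := by
  classical
  have hex : ∃ m, ∃ K ∈ T.level m, J ⊆ K ∧ P K := by
    obtain ⟨m, hm⟩ := T.mem_iff_exists_level.1 (hP J hJ)
    exact ⟨m, J, hm, subset_rfl, hJ⟩
  obtain ⟨K, hK, hJK, hPK⟩ := Nat.find_spec hex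
  refine ⟨K, hJK, hPK, fun L hPL hKL => ?_⟩
  by_contra hLK
  obtain ⟨m, hm⟩ := T.mem_iff_exists_level.1 (hP L hPL)
  exact (lt_of_ssubset hK hm ⟨hKL, hLK⟩).not_ge
    (Nat.find_min' hex ⟨L, hm, hJK.trans hKL, hPL⟩)

theorem pairwise_disjoint_maximal {P : Set X → Prop} (hP : ∀ K, P K → K ∈ T.mem) :
    {K | Maximal P K}.Pairwise Disjoint := by
  intro K hK L hL hKL
  rw [disjoint_iff_inter_eq_empty, ← not_nonempty_iff_eq_empty]
  intro hne
  rcases subset_or_subset (hP K hK.prop) (hP L hL.prop) hne with h | h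
  · exact hKL (hK.eq_of_subset hL.prop h)
  · exact hKL (hL.eq_of_subset hK.prop h).symm

end DTree

section Averages

variable {μ : Measure X} {T : DTree X μ} {φ : X → ℝ}

theorem setIntegral_sub_eq_trAvg_sub_mul [IsFiniteMeasure μ] {L : Set X} (hL : μ L ≠ 0)
    (hφ : IntegrableOn φ L μ) (c : ℝ) :
    ∫ x in L, (φ x - c) ∂μ = (trAvg μ φ L - c) * μ.real L := by
  have hLr : μ.real L ≠ 0 := (ENNReal.toReal_pos hL (measure_ne_top μ L)).ne'
  rw [integral_sub hφ (integrable_const c), setIntegral_const, smul_eq_mul, trAvg,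
    ← Measure.real]
  field_simp

theorem measure_diff_sUnion_pos [IsFiniteMeasure μ] (hint : Integrable φ μ) {K : Set X}
    {M : Set (Set X)} (hK : μ K ≠ 0) (hMc : M.Countable) (hMd : M.Pairwise Disjoint)
    (hMm : ∀ L ∈ M, MeasurableSet L) (hM0 : ∀ L ∈ M, μ L ≠ 0)
    (hMK : ∀ L ∈ M, L ⊆ K) (hMavg : ∀ L ∈ M, trAvg μ φ K < trAvg μ φ L) :
    0 < μ (K \ ⋃₀ M) := by
  by_contra! hle
  have hnull : μ (K \ ⋃₀ M) = 0 := nonpos_iff_eq_zero.1 hle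
  obtain ⟨L₀, hL₀⟩ : M.Nonempty := by
    refine nonempty_iff_ne_empty.2 fun hM => hK ?_
    simpa [hM] using hnull
  have : Countable M := hMc.to_subtype
  set c := trAvg μ φ K
  have hUK : ⋃₀ M =ᵐ[μ] K := by
    rw [ae_eq_set, sdiff_eq_empty.2 (sUnion_subset hMK)]
    exact ⟨measure_empty, hnull⟩
  -- the excess `∫ (φ - c)` is positive on each `L ∈ M`, yet vanishes on `K`
  have hsum : HasSum (fun L : M => ∫ x in L, (φ x - c) ∂μ) (∫ x in K, (φ x - c) ∂μ) := by
    rw [← setIntegral_congr_set hUK, sUnion_eq_iUnion]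
    exact hasSum_integral_iUnion (fun L => hMm L L.2)
      (fun L L' h => hMd L.2 L'.2 (Subtype.coe_ne_coe.2 h))
      (hint.sub (integrable_const c)).integrableOn
  have hpos : ∀ L : M, 0 < ∫ x in L, (φ x - c) ∂μ := fun L => by
    rw [setIntegral_sub_eq_trAvg_sub_mul (hM0 L L.2) hint.integrableOn]
    exact mul_pos (sub_pos.2 (hMavg L L.2)) (ENNReal.toReal_pos (hM0 L L.2) (measure_ne_top μ _))
  have hzero : ∫ x in K, (φ x - c) ∂μ = 0 := by
    rw [setIntegral_sub_eq_trAvg_sub_mul hK hint.integrableOn, sub_self, zero_mul]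
  exact (hasSum_lt (fun L => (hpos L).le) (hpos ⟨L₀, hL₀⟩) hasSum_zero hsum).ne' hzero

theorem exists_measure_pos_forall_trAvg_le [IsFiniteMeasure μ] (hint : Integrable φ μ)
    {K : Set X} (hK : K ∈ T.mem) :
    ∃ B ⊆ K, 0 < μ B ∧ ∀ y ∈ B, ∀ L ∈ T.mem, y ∈ L → L ⊆ K → trAvg μ φ L ≤ trAvg μ φ K := by
  set P : Set X → Prop := fun L => L ∈ T.mem ∧ L ⊆ K ∧ trAvg μ φ K < trAvg μ φ L
  have hP : ∀ L, P L → L ∈ T.mem := fun L hL => hL.1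
  refine ⟨K \ ⋃₀ {L | Maximal P L}, sdiff_subset, ?_, ?_⟩
  · exact measure_diff_sUnion_pos hint (T.pos K hK).ne'
      (DTree.countable_mem.mono fun L hL => hL.prop.1) (DTree.pairwise_disjoint_maximal hP)
      (fun L hL => T.meas L hL.prop.1) (fun L hL => (T.pos L hL.prop.1).ne')
      (fun L hL => hL.prop.2.1) (fun L hL => hL.prop.2.2)
  · rintro y ⟨-, hy⟩ L hL hyL hLK
    by_contra! hlt
    obtain ⟨L', hLL', hL'⟩ := DTree.exists_maximal hP ⟨hL, hLK, hlt⟩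
    exact hy ⟨L', hL', hLL' hyL⟩

end Averages

section MaximalFunction

variable {μ : Measure X} {T : DTree X μ} {φ : X → ℝ}

theorem trMax_eq_sSup (h0 : ∀ x, 0 ≤ φ x) (x : X) :
    trMax μ T φ x = sSup {r | ∃ I ∈ T.mem, x ∈ I ∧ r = trAvg μ φ I} := by
  simp only [trMax, abs_of_nonneg (h0 _)]

theorem trAvg_le_trMax (h0 : ∀ x, 0 ≤ φ x) {x : X} {I : Set X}
    (hbdd : BddAbove {r | ∃ I ∈ T.mem, x ∈ I ∧ r = trAvg μ φ I}) (hI : I ∈ T.mem) (hx : x ∈ I) :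
    trAvg μ φ I ≤ trMax μ T φ x :=
  trMax_eq_sSup h0 x ▸ le_csSup hbdd ⟨I, hI, hx, rfl⟩

theorem trMax_eq_trAvg_of_forall_le (h0 : ∀ x, 0 ≤ φ x) {x : X} {I : Set X} (hI : I ∈ T.mem)
    (hx : x ∈ I) (hle : ∀ J ∈ T.mem, x ∈ J → trAvg μ φ J ≤ trAvg μ φ I) :
    trMax μ T φ x = trAvg μ φ I := by
  have hub : trAvg μ φ I ∈ upperBounds {r | ∃ I ∈ T.mem, x ∈ I ∧ r = trAvg μ φ I} := by
    rintro r ⟨J, hJ, hxJ, rfl⟩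
    exact hle J hJ hxJ
  exact le_antisymm (trMax_eq_sSup h0 x ▸ csSup_le ⟨_, I, hI, hx, rfl⟩ hub)
    (trAvg_le_trMax h0 ⟨_, hub⟩ hI hx)

theorem mem_trA_of_forall_trAvg_lt (h0 : ∀ x, 0 ≤ φ x) {x : X} {I : Set X} (hI : I ∈ T.mem)
    (hx : x ∈ I) (hle : ∀ J ∈ T.mem, x ∈ J → J ⊆ I → trAvg μ φ J ≤ trAvg μ φ I)
    (hlt : ∀ P ∈ T.mem, I ⊂ P → trAvg μ φ P < trAvg μ φ I) :
    x ∈ trA μ T φ I := by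
  have hmax : trMax μ T φ x = trAvg μ φ I := by
    refine trMax_eq_trAvg_of_forall_le h0 hI hx fun J hJ hxJ => ?_
    rcases DTree.subset_or_ssubset hI hJ hx hxJ with hJI | hIJ
    · exact hle J hJ hxJ hJI
    · exact (hlt J hJ hIJ).le
  refine ⟨fun hbad => (hbad I hI hx).ne hmax.symm, hI, hx, hmax, fun J hJ hxJ hJx => ?_⟩
  rcases DTree.subset_or_ssubset hI hJ hx hxJ with hJI | hIJ
  · exact hJI
  · exact absurd (hJx.symm.trans hmax) (hlt J hJ hIJ).ne

theorem bddAbove_of_mem_trA [IsFiniteMeasure μ] (h0 : ∀ x, 0 ≤ φ x) (hint : Integrable φ μ)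
    {x : X} {L : Set X} (hx : x ∈ trA μ T φ L) :
    BddAbove {r | ∃ I ∈ T.mem, x ∈ I ∧ r = trAvg μ φ I} := by
  obtain ⟨-, hL, hxL, hmax, -⟩ := hx
  by_contra hunb
  -- an unbounded supremum is `0` in `ℝ`, so `φ` integrates to `0` over `L`
  have hL0 : ∫ y in L, φ y ∂μ = 0 := by
    rw [trMax_eq_sSup h0, Real.sSup_of_not_bddAbove hunb, trAvg] at hmax
    exact (mul_eq_zero.1 hmax.symm).resolve_left
      (inv_ne_zero (ENNReal.toReal_pos (T.pos L hL).ne' (measure_ne_top μ L)).ne')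
  refine hunb ⟨(μ L).toReal⁻¹ * ∫ y, φ y ∂μ, ?_⟩
  rintro r ⟨K, hK, hxK, rfl⟩
  have hφK : 0 ≤ ∫ y in K, φ y ∂μ := setIntegral_nonneg (T.meas K hK) fun y _ => h0 y
  have hφ : ∀ {A B : Set X}, A ⊆ B → ∫ y in A, φ y ∂μ ≤ ∫ y in B, φ y ∂μ := fun hAB =>
    setIntegral_mono_set hint.integrableOn (.of_forall h0) hAB.eventuallyLE
  rcases DTree.subset_or_ssubset hL hK hxL hxK with hKL | hLK
  · have hK0 : ∫ y in K, φ y ∂μ = 0 := le_antisymm (hL0 ▸ hφ hKL) hφK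
    rw [trAvg, hK0, mul_zero]
    exact mul_nonneg (inv_nonneg.2 ENNReal.toReal_nonneg) (integral_nonneg h0)
  · refine mul_le_mul ?_ ((hφ (subset_univ K)).trans_eq setIntegral_univ) hφK
      (inv_nonneg.2 ENNReal.toReal_nonneg)
    exact inv_anti₀ (ENNReal.toReal_pos (T.pos L hL).ne' (measure_ne_top μ L))
      (ENNReal.toReal_mono (measure_ne_top μ K) (measure_mono hLK.subset))

theorem trAvg_lt_of_mem_trA [IsFiniteMeasure μ] (h0 : ∀ x, 0 ≤ φ x) (hint : Integrable φ μ)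
    {x : X} {J P : Set X} (hx : x ∈ trA μ T φ J) (hP : P ∈ T.mem) (hJP : J ⊂ P) :
    trAvg μ φ P < trAvg μ φ J := by
  have hbdd := bddAbove_of_mem_trA h0 hint hx
  obtain ⟨-, -, hxJ, hmax, hlargest⟩ := hx
  refine (hmax ▸ trAvg_le_trMax h0 hbdd hP (hJP.subset hxJ)).lt_of_ne fun hPJ => ?_
  exact hJP.not_subset (hlargest P hP (hJP.subset hxJ) (hmax.trans hPJ.symm))

theorem measure_trA_pos [IsFiniteMeasure μ] (h0 : ∀ x, 0 ≤ φ x) (hint : Integrable φ μ)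
    {K : Set X} (hK : K ∈ T.mem) (hlt : ∀ P ∈ T.mem, K ⊂ P → trAvg μ φ P < trAvg μ φ K) :
    0 < μ (trA μ T φ K) := by
  obtain ⟨B, hBK, hB, hBavg⟩ := exists_measure_pos_forall_trAvg_le hint hK
  exact hB.trans_le <| measure_mono fun y hy =>
    mem_trA_of_forall_trAvg_lt h0 hK (hBK hy) (hBavg y hy) hlt

end MaximalFunction

section Subtree

variable {μ : Measure X} {T : DTree X μ} {φ : X → ℝ}

theorem mem_of_mem_trS {I : Set X} (hI : I ∈ trS μ T φ) : I ∈ T.mem := by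
  rcases hI with hI | rfl
  exacts [hI.1, T.top_mem]

theorem trAvg_lt_of_mem_trS [IsFiniteMeasure μ] (h0 : ∀ x, 0 ≤ φ x) (hint : Integrable φ μ)
    {I P : Set X} (hI : I ∈ trS μ T φ) (hP : P ∈ T.mem) (hIP : I ⊂ P) :
    trAvg μ φ P < trAvg μ φ I := by
  rcases hI with hI | rfl
  · obtain ⟨x, hx⟩ := nonempty_of_measure_ne_zero hI.2.ne'
    exact trAvg_lt_of_mem_trA h0 hint hx hP hIP
  · exact absurd (subset_univ P) hIP.not_subset

theorem notMem_of_mem_trA [IsFiniteMeasure μ] (h0 : ∀ x, 0 ≤ φ x) (hint : Integrable φ μ)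
    {x : X} {I J : Set X} (hx : x ∈ trA μ T φ I) (hJ : J ∈ trS μ T φ) (hJI : J ⊂ I) :
    x ∉ J := fun hxJ =>
  (trAvg_lt_of_mem_trS h0 hint hJ hx.2.1 hJI).not_ge <|
    hx.2.2.2.1 ▸ trAvg_le_trMax h0 (bddAbove_of_mem_trA h0 hint hx) (mem_of_mem_trS hJ) hxJ

theorem isStarOf_iff_maximal {I J : Set X} (hI : I ∈ trS μ T φ) :
    J ∈ trS μ T φ ∧ IsStarOf μ T φ J I ↔ Maximal (fun K => K ∈ trS μ T φ ∧ K ⊂ I) J := by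
  constructor
  · rintro ⟨hJ, -, hJI, hmin⟩
    refine ⟨⟨hJ, hJI⟩, fun K ⟨hK, hKI⟩ hJK => ?_⟩
    by_contra hKJ
    exact hKI.not_subset (hmin K hK ⟨hJK, hKJ⟩)
  · rintro hmax
    obtain ⟨hJ, hJI⟩ := hmax.prop
    refine ⟨hJ, hI, hJI, fun K hK hJK => ?_⟩
    obtain ⟨x, hx⟩ := DTree.nonempty_of_mem (mem_of_mem_trS hJ)
    rcases DTree.subset_or_ssubset (mem_of_mem_trS hI) (mem_of_mem_trS hK) (hJI.subset hx)
      (hJK.subset hx) with hKI | hIK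
    · rcases hKI.eq_or_ssubset with rfl | hKI
      · exact subset_rfl
      · exact absurd (hmax.2 ⟨hK, hKI⟩ hJK.subset) hJK.not_subset
    · exact hIK.subset

theorem trAvg_le_of_forall_notMem [IsFiniteMeasure μ] (h0 : ∀ x, 0 ≤ φ x)
    (hint : Integrable φ μ) {x : X} {I : Set X} (hI : I ∈ trS μ T φ) (hx : x ∈ I)
    (hxS : ∀ J ∈ trS μ T φ, J ⊂ I → x ∉ J) {K : Set X} (hK : K ∈ T.mem) (hxK : x ∈ K)
    (hKI : K ⊆ I) : trAvg μ φ K ≤ trAvg μ φ I := by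
  by_contra! hlt
  set P : Set X → Prop := fun L => L ∈ T.mem ∧ L ⊆ I ∧ trAvg μ φ I < trAvg μ φ L
  obtain ⟨K', hKK', hK'⟩ := DTree.exists_maximal (P := P) (fun L hL => hL.1) ⟨hK, hKI, hlt⟩
  obtain ⟨hK'mem, hK'I, hIK'⟩ := hK'.prop
  have hxK' := hKK' hxK
  -- a maximal `K'` beats all of its ancestors, so it carries positive mass of `A(φ, K')`
  have hanc : ∀ Q ∈ T.mem, K' ⊂ Q → trAvg μ φ Q < trAvg μ φ K' := by
    intro Q hQ hK'Q
    rcases DTree.subset_or_ssubset (mem_of_mem_trS hI) hQ hx (hK'Q.subset hxK') with hQI | hIQ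
    · refine (not_lt.1 fun hIQ => ?_).trans_lt hIK'
      exact hK'Q.not_subset (hK'.2 ⟨hQ, hQI, hIQ⟩ hK'Q.subset)
    · exact (trAvg_lt_of_mem_trS h0 hint hI hQ hIQ).trans hIK'
  have hK'S : K' ∈ trS μ T φ := .inl ⟨hK'mem, measure_trA_pos h0 hint hK'mem hanc⟩
  exact hxS K' hK'S (hK'I.ssubset_of_ne fun h => (h ▸ hIK').false) hxK'

theorem trA_eq_diff_sUnion [IsFiniteMeasure μ] (h0 : ∀ x, 0 ≤ φ x) (hint : Integrable φ μ)
    {I : Set X} (hI : I ∈ trS μ T φ) :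
    trA μ T φ I = I \ ⋃₀ {J | J ∈ trS μ T φ ∧ IsStarOf μ T φ J I} := by
  ext x
  refine ⟨fun hx => ⟨hx.2.2.1, fun ⟨J, hJ, hxJ⟩ => ?_⟩, fun ⟨hxI, hxF⟩ => ?_⟩
  · exact notMem_of_mem_trA h0 hint hx hJ.1 hJ.2.2.1 hxJ
  · have hxS : ∀ J ∈ trS μ T φ, J ⊂ I → x ∉ J := fun J hJ hJI hxJ => by
      obtain ⟨J', hJJ', hJ'⟩ := DTree.exists_maximal (P := fun K => K ∈ trS μ T φ ∧ K ⊂ I)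
        (fun K hK => mem_of_mem_trS hK.1) ⟨hJ, hJI⟩
      exact hxF ⟨J', (isStarOf_iff_maximal hI).2 hJ', hJJ' hxJ⟩
    exact mem_trA_of_forall_trAvg_lt h0 (mem_of_mem_trS hI) hxI
      (fun K hK hxK hKI => trAvg_le_of_forall_notMem h0 hint hI hxI hxS hK hxK hKI)
      fun P hP hIP => trAvg_lt_of_mem_trS h0 hint hI hP hIP

end Subtree

theorem statement7_general {X : Type*} [MeasurableSpace X] (μ : Measure X)
    [IsProbabilityMeasure μ] (T : DTree X μ)
    (φ : X → ℝ) (h0 : ∀ x, 0 ≤ φ x) (hint : Integrable φ μ)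
    (I : Set X) (hI : I ∈ trS μ T φ) :
    trA μ T φ I = I \ ⋃₀ {J | J ∈ trS μ T φ ∧ IsStarOf μ T φ J I} ∧
    μ (trA μ T φ I) =
      μ I - ∑' J : {J | J ∈ trS μ T φ ∧ IsStarOf μ T φ J I}, μ (J : Set X) := by
  set F := {J | J ∈ trS μ T φ ∧ IsStarOf μ T φ J I}
  have hFmem : ∀ J ∈ F, J ∈ T.mem := fun J hJ => mem_of_mem_trS hJ.1
  have hFc : F.Countable := DTree.countable_mem.mono hFmem
  have hFm : ∀ J ∈ F, MeasurableSet J := fun J hJ => T.meas J (hFmem J hJ)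
  have hFd : F.Pairwise Disjoint := by
    rw [show F = {J | Maximal (fun K => K ∈ trS μ T φ ∧ K ⊂ I) J} from
      ext fun J => isStarOf_iff_maximal hI]
    exact DTree.pairwise_disjoint_maximal fun K hK => mem_of_mem_trS hK.1
  have hA := trA_eq_diff_sUnion h0 hint hI
  refine ⟨hA, ?_⟩
  rw [hA, measure_sdiff (sUnion_subset fun J hJ => hJ.2.2.1.subset)
    (MeasurableSet.sUnion hFc hFm).nullMeasurableSet (measure_ne_top μ _),
    measure_sUnion hFc hFd hFm]

/-- for `I ∈ S_φ`, `A(φ,I) = I \ ⋃ {J ∈ S_φ : J* = I}` and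
`μ(A(φ,I)) = μ(I) - Σ_{J ∈ S_φ, J* = I} μ(J)`. -/
theorem statement7 {X : Type*} [MeasurableSpace X] (μ : Measure X)
    [IsProbabilityMeasure μ] [NullSingletonClass μ] (T : DTree X μ)
    (φ : X → ℝ) (h0 : ∀ x, 0 ≤ φ x) (hint : Integrable φ μ) (hgood : TGood μ T φ)
    (I : Set X) (hI : I ∈ trS μ T φ) :
    trA μ T φ I = I \ ⋃₀ {J | J ∈ trS μ T φ ∧ IsStarOf μ T φ J I} ∧
    μ (trA μ T φ I) =
      μ I - ∑' J : {J | J ∈ trS μ T φ ∧ IsStarOf μ T φ J I}, μ (J : Set X) :=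
  statement7_general μ T φ h0 hint I hI
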